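/- arXiv:2111.05697 — 8 statements merged into one kernel-verified Lean document; each statement's English description precedes it below -/
import Mathlib

section
/- Let G be a finite insoluble group. The soluble graph of G is connected if and only if the soluble graph of G/R(G) is connected, and moreover the two graphs have the same diameter. -/
/-!
As `R` is soluble and normal, a pair of elements generates a soluble subgroup exactly when its
image in `G / R` does, since an extension of a soluble group by a soluble group is soluble.
So the soluble graph of `G` is that of `G / R` with every vertex blown up into a clique (a coset
of `R`). Such a blow-up preserves connectivity and distances between distinct cliques, and the
only new distances, inside one clique, equal `1`; this cannot exceed the diameter of the soluble
graph of `G / R`, which has two distinct vertices because `G / R` is not even abelian.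
-/

/-- The soluble graph of `G` relative to a subgroup `R` (intended: the soluble radical):
vertices are the elements of `G` outside `R`, adjacent iff they generate a soluble subgroup. -/
def solubleGraph (G : Type*) [Group G] (R : Subgroup G) :
    SimpleGraph {x : G // x ∉ R} :=
  SimpleGraph.fromRel (fun x y => IsSolvable (Subgroup.closure ({x.1, y.1} : Set G)))

namespace SimpleGraph

variable {V W : Type*} {G : SimpleGraph V} {H : SimpleGraph W}

theorem edist_le_of_forall_walk {u v : V} {a b : W}
    (h : ∀ p : G.Walk u v, ∃ q : H.Walk a b, q.length ≤ p.length) :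
    H.edist a b ≤ G.edist u v := by
  rw [edist_eq_sInf (G := G)]
  refine le_sInf ?_
  rintro _ ⟨p, rfl⟩
  obtain ⟨q, hq⟩ := h p
  exact (edist_le q).trans (ENat.natCast_le_natCast.mpr hq)

theorem Hom.edist_le (f : G →g H) (u v : V) : H.edist (f u) (f v) ≤ G.edist u v :=
  edist_le_of_forall_walk fun p => ⟨p.map f, (Walk.length_map f p).le⟩

/-- `G` arises from `H` by replacing each vertex `w` with a clique on the fibre `π ⁻¹' {w}`. -/
structure IsCliqueBlowup (G : SimpleGraph V) (H : SimpleGraph W) (π : V → W) : Prop where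
  surjective : Function.Surjective π
  adj_iff {u v : V} : u ≠ v → (G.Adj u v ↔ π u = π v ∨ H.Adj (π u) (π v))

namespace IsCliqueBlowup

variable {π : V → W} (hB : G.IsCliqueBlowup H π)
include hB

theorem adj_of_map_eq {u v : V} (hne : u ≠ v) (heq : π u = π v) : G.Adj u v :=
  (hB.adj_iff hne).mpr (Or.inl heq)

theorem exists_walk_map_length_le {u v : V} (p : G.Walk u v) :
    ∃ q : H.Walk (π u) (π v), q.length ≤ p.length := by
  induction p with
  | nil => exact ⟨.nil, le_rfl⟩
  | cons hadj p ih =>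
    obtain ⟨q, hq⟩ := ih
    rcases (hB.adj_iff hadj.ne).mp hadj with heq | hadj'
    · exact ⟨q.copy heq.symm rfl, by rw [Walk.length_copy, Walk.length_cons]; omega⟩
    · exact ⟨q.cons hadj', by rw [Walk.length_cons, Walk.length_cons]; omega⟩

theorem edist_map_le (u v : V) : H.edist (π u) (π v) ≤ G.edist u v :=
  edist_le_of_forall_walk hB.exists_walk_map_length_le

/-- Every section of `π` is a graph homomorphism. -/
theorem exists_hom_section {u v : V} (hne : π u ≠ π v) :
    ∃ σ : H →g G, σ (π u) = u ∧ σ (π v) = v := by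
  classical
  set s := Function.update (Function.update (Function.surjInv hB.surjective) (π u) u) (π v) v
  have hs : ∀ w, π (s w) = w := by
    intro w
    by_cases hv : w = π v
    · simp [s, hv]
    by_cases hu : w = π u
    · simp [s, hu, hne]
    simp [s, hu, hv, Function.surjInv_eq]
  refine ⟨⟨s, fun {a b} hab => ?_⟩, by simp [s, hne], by simp [s]⟩
  have hsne : s a ≠ s b := fun h => hab.ne (by rw [← hs a, h, hs b])
  exact (hB.adj_iff hsne).mpr (Or.inr (by rwa [hs, hs]))

theorem edist_le_of_map_ne {u v : V} (hne : π u ≠ π v) :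
    G.edist u v ≤ H.edist (π u) (π v) := by
  obtain ⟨σ, hu, hv⟩ := hB.exists_hom_section hne
  simpa only [hu, hv] using σ.edist_le (π u) (π v)

theorem reachable_iff {u v : V} : G.Reachable u v ↔ H.Reachable (π u) (π v) := by
  refine ⟨fun h => ?_, fun h => ?_⟩
  · rw [← edist_ne_top_iff_reachable] at h ⊢
    exact ne_top_of_le_ne_top h (hB.edist_map_le u v)
  · by_cases heq : π u = π v
    · rcases eq_or_ne u v with rfl | hne
      · exact Reachable.refl u
      · exact (hB.adj_of_map_eq hne heq).reachable
    · rw [← edist_ne_top_iff_reachable] at h ⊢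
      exact ne_top_of_le_ne_top h (hB.edist_le_of_map_ne heq)

theorem connected_iff : G.Connected ↔ H.Connected := by
  have hne : Nonempty V ↔ Nonempty W :=
    ⟨fun ⟨v⟩ => ⟨π v⟩, fun ⟨w⟩ => ⟨(hB.surjective w).choose⟩⟩
  simp only [SimpleGraph.connected_iff, Preconnected, hB.surjective.forall, hB.reachable_iff, hne]

theorem ediam_eq [Nontrivial W] : G.ediam = H.ediam := by
  refine le_antisymm (ediam_le_of_edist_le fun u v => ?_) (ediam_le_of_edist_le ?_)
  · by_cases heq : π u = π v
    · calc G.edist u v ≤ 1 := edist_le_one_iff_adj_or_eq.mpr <|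
              (eq_or_ne u v).elim Or.inr fun hne => Or.inl (hB.adj_of_map_eq hne heq)
        _ ≤ H.ediam := Order.one_le_iff_ne_zero.mpr ediam_ne_zero
    · exact (hB.edist_le_of_map_ne heq).trans edist_le_ediam
  · simp only [hB.surjective.forall]
    exact fun u v => (hB.edist_map_le u v).trans edist_le_ediam

end IsCliqueBlowup

end SimpleGraph

open Subgroup

section Group

variable {G G' : Type*} [Group G] [Group G']

theorem Group.isSolvable_of_map {f : G →* G'} (hf : Group.IsSolvable f.ker) {H : Subgroup G}
    (hH : Group.IsSolvable (H.map f)) : Group.IsSolvable H := by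
  have hker : Group.IsSolvable (f.ker.subgroupOf H) := by
    let ι : f.ker.subgroupOf H →* f.ker :=
      { toFun := fun x => ⟨x.1.1, mem_subgroupOf.mp x.2⟩
        map_one' := rfl
        map_mul' := fun _ _ => rfl }
    refine isSolvable_of_isSolvable_injective (f := ι) fun x y hxy => ?_
    exact Subtype.ext (Subtype.ext (congrArg (fun z : f.ker => (z : G)) hxy))
  exact isSolvable_of_ker_le_range (f.ker.subgroupOf H).subtype (f.subgroupMap H)
    (by rw [ker_subgroupMap, range_subtype])

theorem Group.isSolvable_map_iff {f : G →* G'} (hf : Group.IsSolvable f.ker) (H : Subgroup G) :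
    Group.IsSolvable (H.map f) ↔ Group.IsSolvable H :=
  ⟨isSolvable_of_map hf, fun _ => isSolvable_of_surjective (f.subgroupMap_surjective H)⟩

theorem Group.isSolvable_closure_singleton (a : G) :
    Group.IsSolvable (closure ({a} : Set G)) := by
  rw [← zpowers_eq_closure]
  exact isSolvable_of_comm fun x y => IsMulCommutative.is_comm.comm x y

theorem Group.nontrivial_of_not_isSolvable (hG : ¬ Group.IsSolvable G) :
    Nontrivial {x : G // x ∉ (⊥ : Subgroup G)} := by
  obtain ⟨a, b, hab⟩ : ∃ a b : G, a * b ≠ b * a := by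
    by_contra! h
    exact hG (isSolvable_of_comm h)
  have ha : a ∉ (⊥ : Subgroup G) := fun h => hab (by simp [mem_bot.mp h])
  have hb : b ∉ (⊥ : Subgroup G) := fun h => hab (by simp [mem_bot.mp h])
  exact ⟨⟨a, ha⟩, ⟨b, hb⟩, fun h => hab (by rw [Subtype.mk.inj h])⟩

end Group

section SolubleGraph

variable {G : Type*} [Group G]

theorem solubleGraph_adj_iff (R : Subgroup G) {u v : {x : G // x ∉ R}} :
    (solubleGraph G R).Adj u v ↔ u ≠ v ∧ Group.IsSolvable (closure ({u.1, v.1} : Set G)) := by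
  rw [solubleGraph, SimpleGraph.fromRel_adj, Set.pair_comm v.1, or_self]
  rfl

variable (R : Subgroup G) [R.Normal]

theorem isSolvable_closure_pair_mk_iff (hR : Group.IsSolvable R) (x y : G) :
    Group.IsSolvable (closure ({(x : G ⧸ R), (y : G ⧸ R)} : Set (G ⧸ R))) ↔
      Group.IsSolvable (closure ({x, y} : Set G)) := by
  rw [← Group.isSolvable_map_iff (f := QuotientGroup.mk' R) (by rwa [QuotientGroup.ker_mk']),
    MonoidHom.map_closure, Set.image_pair]
  rfl

def solubleGraphQuotientMap (u : {x : G // x ∉ R}) : {x : G ⧸ R // x ∉ (⊥ : Subgroup (G ⧸ R))} :=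
  ⟨u.1, by simpa [mem_bot, QuotientGroup.eq_one_iff] using u.2⟩

theorem coe_solubleGraphQuotientMap (u : {x : G // x ∉ R}) :
    (solubleGraphQuotientMap R u : G ⧸ R) = u.1 :=
  rfl

theorem solubleGraphQuotientMap_surjective : Function.Surjective (solubleGraphQuotientMap R) := by
  rintro ⟨q, hq⟩
  obtain ⟨x, rfl⟩ := QuotientGroup.mk'_surjective R q
  exact ⟨⟨x, by simpa [mem_bot, QuotientGroup.eq_one_iff] using hq⟩, rfl⟩

theorem isCliqueBlowup_solubleGraph_quotient (hR : Group.IsSolvable R) :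
    (solubleGraph G R).IsCliqueBlowup (solubleGraph (G ⧸ R) ⊥) (solubleGraphQuotientMap R) := by
  refine ⟨solubleGraphQuotientMap_surjective R, fun {u v} hne => ?_⟩
  rw [solubleGraph_adj_iff, solubleGraph_adj_iff, coe_solubleGraphQuotientMap,
    coe_solubleGraphQuotientMap, isSolvable_closure_pair_mk_iff R hR]
  by_cases heq : solubleGraphQuotientMap R u = solubleGraphQuotientMap R v
  · have hsol : Group.IsSolvable (closure ({u.1, v.1} : Set G)) := by
      have hpair : (u.1 : G ⧸ R) = v.1 := congrArg Subtype.val heq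
      rw [← isSolvable_closure_pair_mk_iff R hR, hpair, Set.pair_eq_singleton]
      exact Group.isSolvable_closure_singleton _
    tauto
  · tauto

end SolubleGraph

theorem stmt1_general {G : Type*} [Group G] (hG : ¬ IsSolvable G)
    (R : Subgroup G) [R.Normal] (hRsol : IsSolvable R) :
    ((solubleGraph G R).Connected ↔ (solubleGraph (G ⧸ R) ⊥).Connected) ∧
      (solubleGraph G R).ediam = (solubleGraph (G ⧸ R) ⊥).ediam := by
  have hB := isCliqueBlowup_solubleGraph_quotient R hRsol
  have hQ : ¬ Group.IsSolvable (G ⧸ R) := fun hQ =>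
    hG ((Group.isSolvable_iff_subgroup_quotient R).mpr ⟨hRsol, hQ⟩)
  have := Group.nontrivial_of_not_isSolvable hQ
  exact ⟨hB.connected_iff, hB.ediam_eq⟩

theorem stmt1 {G : Type*} [Group G] [Finite G] (hG : ¬ IsSolvable G)
    (R : Subgroup G) [R.Normal] (hRsol : IsSolvable R)
    (hRmax : ∀ N : Subgroup G, N.Normal → IsSolvable N → N ≤ R) :
    ((solubleGraph G R).Connected ↔ (solubleGraph (G ⧸ R) ⊥).Connected) ∧
      (solubleGraph G R).ediam = (solubleGraph (G ⧸ R) ⊥).ediam :=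
  stmt1_general hG R hRsol
end

section
/- Let H and K be nontrivial finite groups with trivial soluble radical, i.e., R(H) = R(K) = 1. Then the soluble graph of H × K has diameter at most 3. -/
lemma isSolvable_closure_pair_of_commute {G : Type*} [Group G] {a b : G}
    (h : Commute a b) : Group.IsSolvable (Subgroup.closure ({a, b} : Set G)) := by
  have hcomm : ∀ x ∈ ({a, b} : Set G), ∀ y ∈ ({a, b} : Set G), x * y = y * x := by
    rintro x (rfl | rfl) y (rfl | rfl)
    exacts [rfl, h, h.symm, rfl]
  exact Group.isSolvable_of_comm (isMulCommutative_iff.1 (Subgroup.isMulCommutative_closure hcomm))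

section SolubleGraph

variable {G : Type*} [Group G] {R : Subgroup G}

lemma solubleGraph_edist_le_one_of_commute {x y : {g : G // g ∉ R}} (h : Commute x.1 y.1) :
    (solubleGraph G R).edist x y ≤ 1 := by
  rw [SimpleGraph.edist_le_one_iff_adj_or_eq]
  by_cases hxy : x = y
  · exact Or.inr hxy
  · exact Or.inl ⟨hxy, Or.inl (isSolvable_closure_pair_of_commute h)⟩

lemma solubleGraph_edist_le_three_of_commute {x y : {g : G // g ∉ R}} (a b : {g : G // g ∉ R})
    (hxa : Commute x.1 a.1) (hab : Commute a.1 b.1) (hby : Commute b.1 y.1) :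
    (solubleGraph G R).edist x y ≤ 3 :=
  calc (solubleGraph G R).edist x y
      ≤ (solubleGraph G R).edist x a +
          ((solubleGraph G R).edist a b + (solubleGraph G R).edist b y) :=
        SimpleGraph.edist_triangle.trans (add_le_add_right SimpleGraph.edist_triangle _)
    _ ≤ 1 + (1 + 1) := by
        gcongr <;> exact solubleGraph_edist_le_one_of_commute ‹_›
    _ = 3 := by norm_num

end SolubleGraph

section Prod

variable {H K : Type*} [Monoid H] [Monoid K]

lemma Prod.exists_ne_one_commute_one_mk [Nontrivial K] (g : H × K) :
    ∃ k : K, k ≠ 1 ∧ Commute g (1, k) := by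
  by_cases hg : g.2 = 1
  · obtain ⟨k, hk⟩ := exists_ne (1 : K)
    exact ⟨k, hk, Prod.commute_iff.2 ⟨.one_right _, hg ▸ .one_left k⟩⟩
  · exact ⟨g.2, hg, Prod.commute_iff.2 ⟨.one_right _, .refl _⟩⟩

lemma Prod.exists_ne_one_commute_mk_one [Nontrivial H] (g : H × K) :
    ∃ h : H, h ≠ 1 ∧ Commute g (h, 1) := by
  by_cases hg : g.1 = 1
  · obtain ⟨h, hh⟩ := exists_ne (1 : H)
    exact ⟨h, hh, Prod.commute_iff.2 ⟨hg ▸ .one_left h, .one_right _⟩⟩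
  · exact ⟨g.1, hg, Prod.commute_iff.2 ⟨.refl _, .one_right _⟩⟩

end Prod

theorem stmt2_general {H K : Type*} [Group H] [Group K]
    [Nontrivial H] [Nontrivial K] :
    (solubleGraph (H × K) ⊥).ediam ≤ 3 := by
  refine SimpleGraph.ediam_le_of_edist_le fun x y => ?_
  obtain ⟨k, hk, hxk⟩ := Prod.exists_ne_one_commute_one_mk x.1
  obtain ⟨h, hh, hyh⟩ := Prod.exists_ne_one_commute_mk_one y.1
  refine solubleGraph_edist_le_three_of_commute ⟨(1, k), by simp [hk]⟩ ⟨(h, 1), by simp [hh]⟩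
    hxk ?_ hyh.symm
  exact Prod.commute_iff.2 ⟨.one_left h, .one_right k⟩

theorem stmt2 {H K : Type*} [Group H] [Group K] [Finite H] [Finite K]
    [Nontrivial H] [Nontrivial K]
    (hH : ∀ N : Subgroup H, N.Normal → IsSolvable N → N = ⊥)
    (hK : ∀ N : Subgroup K, N.Normal → IsSolvable N → N = ⊥) :
    (solubleGraph (H × K) ⊥).ediam ≤ 3 :=
  stmt2_general
end

section
/- Let H and K be nontrivial finite groups with R(H) = R(K) = 1. If the soluble graphs of H and of K both have diameter exactly 2, then the soluble graph of H × K has diameter exactly 2. -/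
/-!
Write `a ~ b` (`IsSolvablePair a b`) when `⟨a, b⟩` is soluble; note that `1 ~ a` for every `a`.
Since `⟨(a, c), (b, d)⟩ ≤ ⟨a, b⟩ × ⟨c, d⟩`, a middle vertex `h` of a path `a ~ h ~ b` in `Γ_S(H)`
yields the middle vertex `(h, 1)` of a path `(a, c) ~ (h, 1) ~ (b, d)` in `Γ_S(H × K)`, so the
diameter stays at most 2. Conversely `⟨a, b⟩` is the image of `⟨(a, 1), (b, 1)⟩` under the first
projection, so two non-adjacent vertices of `Γ_S(H)` give two non-adjacent vertices of
`Γ_S(H × K)`.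
-/

open Subgroup SimpleGraph

def IsSolvablePair {G : Type*} [Group G] (a b : G) : Prop :=
  Group.IsSolvable (closure ({a, b} : Set G))

section IsSolvablePair

variable {G G' : Type*} [Group G] [Group G']

lemma Subgroup.isSolvable_of_le {A B : Subgroup G} (h : A ≤ B) [Group.IsSolvable B] :
    Group.IsSolvable A :=
  Group.isSolvable_of_isSolvable_injective (inclusion_injective h)

lemma IsSolvablePair.of_closure_le {a b c d : G}
    (h : closure ({a, b} : Set G) ≤ closure ({c, d} : Set G)) (hcd : IsSolvablePair c d) :
    IsSolvablePair a b :=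
  have : Group.IsSolvable (closure ({c, d} : Set G)) := hcd
  Subgroup.isSolvable_of_le h

lemma IsSolvablePair.refl (a : G) : IsSolvablePair a a := by
  rw [IsSolvablePair, Set.pair_eq_singleton, ← zpowers_eq_closure]
  exact Group.isSolvable_of_comm mul_comm'

lemma IsSolvablePair.symm {a b : G} (h : IsSolvablePair a b) : IsSolvablePair b a := by
  rwa [IsSolvablePair, Set.pair_comm]

lemma isSolvablePair_one_left (a : G) : IsSolvablePair 1 a :=
  (IsSolvablePair.refl a).of_closure_le <| (closure_le _).2 <| Set.insert_subset_iff.2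
    ⟨one_mem _, Set.singleton_subset_iff.2 (subset_closure (Set.mem_insert a _))⟩

lemma isSolvablePair_one_right (a : G) : IsSolvablePair a 1 :=
  (isSolvablePair_one_left a).symm

lemma IsSolvablePair.map {a b : G} (h : IsSolvablePair a b) (f : G →* G') :
    IsSolvablePair (f a) (f b) := by
  have : Group.IsSolvable (closure ({a, b} : Set G)) := h
  have hmap : closure ({f a, f b} : Set G') = (closure ({a, b} : Set G)).map f := by
    rw [MonoidHom.map_closure, Set.image_pair]
  rw [IsSolvablePair, hmap]
  exact Group.isSolvable_of_surjective (f.subgroupMap_surjective _)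

lemma IsSolvablePair.prod {a b : G} {c d : G'} (hab : IsSolvablePair a b)
    (hcd : IsSolvablePair c d) : IsSolvablePair (a, c) (b, d) := by
  have : Group.IsSolvable (closure ({a, b} : Set G)) := hab
  have : Group.IsSolvable (closure ({c, d} : Set G')) := hcd
  have : Group.IsSolvable ((closure ({a, b} : Set G)).prod (closure ({c, d} : Set G'))) :=
    Group.isSolvable_of_isSolvable_injective (f := (prodEquiv _ _).toMonoidHom)
      (by rw [MulEquiv.coe_toMonoidHom]; exact (prodEquiv _ _).injective)
  rw [IsSolvablePair]
  refine Subgroup.isSolvable_of_le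
    (B := (closure ({a, b} : Set G)).prod (closure ({c, d} : Set G'))) ((closure_le _).2 ?_)
  rintro x (rfl | rfl) <;>
    exact ⟨subset_closure (by simp), subset_closure (by simp)⟩

lemma exists_ne_one_isSolvablePair [Nontrivial G] (b : G) : ∃ c ≠ 1, IsSolvablePair c b := by
  by_cases hb : b = 1
  · obtain ⟨c, hc⟩ := exists_ne (1 : G)
    subst hb
    exact ⟨c, hc, isSolvablePair_one_right c⟩
  · exact ⟨b, hb, IsSolvablePair.refl b⟩

end IsSolvablePair

lemma SimpleGraph.edist_le_two_iff {V : Type*} {Γ : SimpleGraph V} {u v : V} :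
    Γ.edist u v ≤ 2 ↔ ∃ w, Γ.edist u w ≤ 1 ∧ Γ.edist w v ≤ 1 := by
  refine ⟨fun h => ?_, fun ⟨w, huw, hwv⟩ => ?_⟩
  · by_cases h1 : Γ.edist u v ≤ 1
    · exact ⟨u, by simp, h1⟩
    · have h2 : Γ.edist u v = 2 := le_antisymm h (Order.add_one_le_of_lt (not_le.1 h1))
      obtain ⟨-, -, w, hw⟩ := edist_eq_two_iff.1 h2
      rw [mem_commonNeighbors] at hw
      exact ⟨w, (edist_eq_one_iff_adj.2 hw.1).le, (edist_eq_one_iff_adj.2 hw.2.symm).le⟩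
  · calc Γ.edist u v ≤ Γ.edist u w + Γ.edist w v := SimpleGraph.edist_triangle
      _ ≤ 1 + 1 := add_le_add huw hwv
      _ = 2 := one_add_one_eq_two

lemma SimpleGraph.two_le_ediam_iff {V : Type*} {Γ : SimpleGraph V} :
    2 ≤ Γ.ediam ↔ ∃ u v, ¬Γ.edist u v ≤ 1 := by
  rw [← one_add_one_eq_two, ENat.add_one_le_iff ENat.one_ne_top, ← not_le, ediam_le_iff]
  simp only [not_forall]

section solubleGraph

variable {G : Type*} [Group G]

lemma solubleGraph_adj {R : Subgroup G} {x y : {g : G // g ∉ R}} :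
    (solubleGraph G R).Adj x y ↔ x ≠ y ∧ IsSolvablePair x.1 y.1 :=
  (fromRel_adj _ _ _).trans (and_congr_right fun _ => or_iff_left_of_imp IsSolvablePair.symm)

lemma solubleGraph_edist_le_one_iff {R : Subgroup G} {x y : {g : G // g ∉ R}} :
    (solubleGraph G R).edist x y ≤ 1 ↔ IsSolvablePair x.1 y.1 := by
  rw [edist_le_one_iff_adj_or_eq, solubleGraph_adj]
  by_cases hxy : x = y
  · simp only [hxy, IsSolvablePair.refl, or_true]
  · simp only [hxy, ne_eq, not_false_eq_true, true_and, or_false]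

lemma exists_isSolvablePair_middle [Nontrivial G] (h : (solubleGraph G ⊥).ediam ≤ 2) (a b : G) :
    ∃ c ≠ 1, IsSolvablePair a c ∧ IsSolvablePair c b := by
  by_cases ha : a = 1
  · obtain ⟨c, hc, hcb⟩ := exists_ne_one_isSolvablePair b
    subst ha
    exact ⟨c, hc, isSolvablePair_one_left c, hcb⟩
  by_cases hb : b = 1
  · obtain ⟨c, hc, hca⟩ := exists_ne_one_isSolvablePair a
    subst hb
    exact ⟨c, hc, hca.symm, isSolvablePair_one_right c⟩
  have hab := (edist_le_ediam (u := ⟨a, by simpa⟩) (v := ⟨b, by simpa⟩)).trans h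
  obtain ⟨w, haw, hwb⟩ := edist_le_two_iff.1 hab
  have haw' := solubleGraph_edist_le_one_iff.1 haw
  have hwb' := solubleGraph_edist_le_one_iff.1 hwb
  exact ⟨w.1, by simpa using w.2, haw', hwb'⟩

lemma ediam_solubleGraph_le_two
    (h : ∀ a b : G, ∃ c ≠ 1, IsSolvablePair a c ∧ IsSolvablePair c b) :
    (solubleGraph G ⊥).ediam ≤ 2 :=
  ediam_le_iff.2 fun x y =>
    let ⟨c, hc, hxc, hcy⟩ := h x y
    edist_le_two_iff.2 ⟨⟨c, by simpa⟩, solubleGraph_edist_le_one_iff.2 hxc,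
      solubleGraph_edist_le_one_iff.2 hcy⟩

lemma two_le_ediam_solubleGraph_iff :
    2 ≤ (solubleGraph G ⊥).ediam ↔ ∃ a b : G, ¬IsSolvablePair a b := by
  rw [two_le_ediam_iff]
  constructor
  · rintro ⟨x, y, hxy⟩
    exact ⟨x, y, mt solubleGraph_edist_le_one_iff.2 hxy⟩
  · rintro ⟨a, b, hab⟩
    have ha : a ≠ 1 := by
      rintro rfl
      exact hab (isSolvablePair_one_left b)
    have hb : b ≠ 1 := by
      rintro rfl
      exact hab (isSolvablePair_one_right a)
    exact ⟨⟨a, by simpa⟩, ⟨b, by simpa⟩, mt solubleGraph_edist_le_one_iff.1 hab⟩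

end solubleGraph

section prod

variable {H K : Type*} [Group H] [Group K]

lemma ediam_solubleGraph_prod_le_two [Nontrivial H] (h : (solubleGraph H ⊥).ediam ≤ 2) :
    (solubleGraph (H × K) ⊥).ediam ≤ 2 :=
  ediam_solubleGraph_le_two fun a b =>
    let ⟨c, hc, hac, hcb⟩ := exists_isSolvablePair_middle h a.1 b.1
    ⟨(c, 1), fun e => hc (congrArg Prod.fst e), hac.prod (isSolvablePair_one_right a.2),
      hcb.prod (isSolvablePair_one_left b.2)⟩

lemma two_le_ediam_solubleGraph_prod (h : 2 ≤ (solubleGraph H ⊥).ediam) :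
    2 ≤ (solubleGraph (H × K) ⊥).ediam :=
  let ⟨a, b, hab⟩ := two_le_ediam_solubleGraph_iff.1 h
  two_le_ediam_solubleGraph_iff.2
    ⟨(a, 1), (b, 1), fun h' => hab (h'.map (MonoidHom.fst H K))⟩

end prod

theorem stmt3_general {H K : Type*} [Group H] [Group K]
    [Nontrivial H]
    (hdH : (solubleGraph H ⊥).ediam = 2) :
    (solubleGraph (H × K) ⊥).ediam = 2 :=
  le_antisymm (ediam_solubleGraph_prod_le_two hdH.le) (two_le_ediam_solubleGraph_prod hdH.ge)

theorem stmt3 {H K : Type*} [Group H] [Group K] [Finite H] [Finite K]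
    [Nontrivial H] [Nontrivial K]
    (hH : ∀ N : Subgroup H, N.Normal → IsSolvable N → N = ⊥)
    (hK : ∀ N : Subgroup K, N.Normal → IsSolvable N → N = ⊥)
    (hdH : (solubleGraph H ⊥).ediam = 2) (hdK : (solubleGraph K ⊥).ediam = 2) :
    (solubleGraph (H × K) ⊥).ediam = 2 :=
  stmt3_general hdH
end

section
/- Let G be a nontrivial finite group with R(G) = 1. If x, y ∈ G are nontrivial elements such that the normalizers N_G(⟨x⟩) and N_G(⟨y⟩) both have even order, then the distance between x and y in the soluble graph of G is at most 3. -/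
/-!
Let `a` and `b` be involutions in `N_G(⟨x⟩)` and `N_G(⟨y⟩)`. Then `x - a - b - y` is a walk in
the soluble graph: `⟨x, a⟩` is an extension of the normal cyclic subgroup `⟨x⟩` by a cyclic
group, likewise `⟨b, y⟩`, and `⟨a, b⟩ = ⟨ab, a⟩` is dihedral since `a` inverts `ab`.
-/

open Subgroup

section

variable {G : Type*} [Group G]

theorem Group.isSolvable_of_isCyclic [IsCyclic G] : Group.IsSolvable G :=
  Group.isSolvable_of_comm fun a b => mul_comm' a b

theorem Group.isSolvable_of_zpowers_normal_of_closure_pair_eq_top {d c : G}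
    [(zpowers d).Normal] (h : closure ({d, c} : Set G) = ⊤) : Group.IsSolvable G := by
  let π := QuotientGroup.mk' (zpowers d)
  have hπd : π d = 1 := (QuotientGroup.eq_one_iff d).mpr (mem_zpowers d)
  have : IsCyclic (G ⧸ zpowers d) := isCyclic_iff_exists_zpowers_eq_top.mpr ⟨π c, calc
    zpowers (π c) = closure (π '' {d, c}) := by
      rw [Set.image_pair, hπd, closure_insert_one]
      exact zpowers_eq_closure _
    _ = map π (closure {d, c}) := (MonoidHom.map_closure π _).symm
    _ = ⊤ := by rw [h, map_top_of_surjective π (QuotientGroup.mk'_surjective _)]⟩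
  rw [Group.isSolvable_iff_subgroup_quotient (zpowers d)]
  exact ⟨Group.isSolvable_of_isCyclic, Group.isSolvable_of_isCyclic⟩

theorem isSolvable_closure_pair_of_mem_normalizer {d c : G}
    (hc : c ∈ normalizer (zpowers d : Set G)) :
    Group.IsSolvable (closure ({d, c} : Set G)) := by
  set H := closure ({d, c} : Set G)
  let d' : H := ⟨d, subset_closure (by simp)⟩
  let c' : H := ⟨c, subset_closure (by simp)⟩
  have hH : H ≤ normalizer (zpowers d : Set G) := by
    rw [closure_le]
    rintro z (rfl | rfl)
    exacts [le_normalizer (mem_zpowers z), hc]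
  have hd' : zpowers d' = (zpowers d).subgroupOf H := by
    rw [← comap_map_eq_self_of_injective H.subtype_injective (zpowers d'),
      MonoidHom.map_zpowers]
    rfl
  have : (zpowers d').Normal := by
    rw [hd', normal_subgroupOf_iff_le_normalizer (zpowers_le.mpr d'.2)]
    exact hH
  refine Group.isSolvable_of_zpowers_normal_of_closure_pair_eq_top (d := d') (c := c') ?_
  rw [← closure_closure_coe_preimage (k := ({d, c} : Set G))]
  congr 1
  ext z
  simp [d', c', Subtype.ext_iff]

theorem mem_normalizer_zpowers_of_conj_eq_inv {c d : G} (h : c * d * c⁻¹ = d⁻¹) :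
    c ∈ normalizer (zpowers d : Set G) := by
  rw [mem_normalizer_iff_map_conj_eq, MonoidHom.map_zpowers]
  simp [MulAut.conj_apply, h]

theorem isSolvable_closure_pair_of_mul_self_eq_one {a b : G} (ha : a * a = 1) (hb : b * b = 1) :
    Group.IsSolvable (closure ({a, b} : Set G)) := by
  have ha' : a⁻¹ = a := inv_eq_of_mul_eq_one_right ha
  have hb' : b⁻¹ = b := inv_eq_of_mul_eq_one_right hb
  have hconj : a * (a * b) * a⁻¹ = (a * b)⁻¹ := by
    rw [mul_inv_rev, ha', hb', ← mul_assoc, ha, one_mul]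
  have hclosure : closure ({a * b, a} : Set G) = closure {a, b} := by
    have hab : a * b ∈ closure ({a, b} : Set G) :=
      mul_mem (subset_closure (by simp)) (subset_closure (by simp))
    have hba : b ∈ closure ({a * b, a} : Set G) := by
      simpa [← mul_assoc, ha] using
        mul_mem (subset_closure (by simp) : a ∈ closure ({a * b, a} : Set G))
          (subset_closure (by simp) : a * b ∈ closure ({a * b, a} : Set G))
    apply le_antisymm <;> rw [closure_le, Set.insert_subset_iff, Set.singleton_subset_iff]
    exacts [⟨hab, subset_closure (by simp)⟩, ⟨subset_closure (by simp), hba⟩]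
  rw [← hclosure]
  exact isSolvable_closure_pair_of_mem_normalizer (mem_normalizer_zpowers_of_conj_eq_inv hconj)

theorem Subgroup.exists_mul_self_eq_one_of_even_card {H : Subgroup G} [Finite H]
    (h : Even (Nat.card H)) : ∃ a ∈ H, a ≠ 1 ∧ a * a = 1 := by
  obtain ⟨a, ha⟩ := exists_prime_orderOf_dvd_card' 2 h.two_dvd
  obtain ⟨ha2, ha1⟩ := orderOf_eq_prime_iff.mp ((orderOf_coe a).trans ha)
  exact ⟨a, a.2, ha1, by rwa [← pow_two]⟩

theorem solubleGraph.exists_walk_length_le_one {R : Subgroup G}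
    (u v : {x : G // x ∉ R}) (h : Group.IsSolvable (closure ({u.1, v.1} : Set G))) :
    ∃ w : (solubleGraph G R).Walk u v, w.length ≤ 1 := by
  by_cases huv : u = v
  · subst huv
    exact ⟨.nil, zero_le_one⟩
  · exact ⟨.cons ((SimpleGraph.fromRel_adj ..).mpr ⟨huv, .inl h⟩) .nil, le_rfl⟩

end

theorem stmt4 {G : Type*} [Group G] [Finite G]
    (x y : G) (hx : x ≠ 1) (hy : y ≠ 1)
    (hnx : Even (Nat.card (Subgroup.normalizer (Subgroup.zpowers x : Set G))))
    (hny : Even (Nat.card (Subgroup.normalizer (Subgroup.zpowers y : Set G)))) :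
    ∃ w : (solubleGraph G ⊥).Walk ⟨x, by simpa using hx⟩ ⟨y, by simpa using hy⟩,
      w.length ≤ 3 := by
  obtain ⟨a, hxa, ha1, ha2⟩ := exists_mul_self_eq_one_of_even_card hnx
  obtain ⟨b, hyb, hb1, hb2⟩ := exists_mul_self_eq_one_of_even_card hny
  obtain ⟨w₁, h₁⟩ := solubleGraph.exists_walk_length_le_one (R := ⊥) ⟨x, by simpa using hx⟩
    ⟨a, by simpa using ha1⟩ (isSolvable_closure_pair_of_mem_normalizer hxa)
  obtain ⟨w₂, h₂⟩ := solubleGraph.exists_walk_length_le_one (R := ⊥) ⟨a, by simpa using ha1⟩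
    ⟨b, by simpa using hb1⟩ (isSolvable_closure_pair_of_mul_self_eq_one ha2 hb2)
  obtain ⟨w₃, h₃⟩ := solubleGraph.exists_walk_length_le_one (R := ⊥) ⟨b, by simpa using hb1⟩
    ⟨y, by simpa using hy⟩ (Set.pair_comm y b ▸ isSolvable_closure_pair_of_mem_normalizer hyb)
  refine ⟨w₁.append (w₂.append w₃), ?_⟩
  rw [SimpleGraph.Walk.length_append, SimpleGraph.Walk.length_append]
  omega
end

section
/- Let G be a nontrivial finite group with R(G) = 1 in which every element is real (conjugate to its inverse). Then the soluble graph of G has diameter at most 3. -/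
/-!
Every nontrivial real element `x` is adjacent to an involution: if `x² = 1` take `x` itself;
otherwise an element `g` inverting `x` normalises `⟨x⟩`, has even order (an odd-order `g` would
lie in `⟨g²⟩`, which centralises `x`), and its involution power `t` still normalises `⟨x⟩`, so
`⟨x, t⟩` is cyclic-by-cyclic. Two involutions generate a dihedral group, hence any two vertices
are joined by a path `x — t — s — y`.
-/

open Subgroup

section

variable {G : Type*} [Group G]

theorem mem_normalizer_zpowers_of_mul_mul_inv_eq_inv {x g : G} (hg : g * x * g⁻¹ = x⁻¹) :
    g ∈ normalizer (zpowers x : Set G) := by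
  rw [mem_normalizer_iff_map_conj_eq, MonoidHom.map_zpowers]
  exact (congrArg zpowers hg).trans zpowers_inv

open scoped IsMulCommutative in
theorem isSolvable_closure_pair_of_mem_normalizer_zpowers {x g : G}
    (hg : g ∈ normalizer (zpowers x : Set G)) : Group.IsSolvable (closure {x, g}) := by
  set H := closure ({x, g} : Set G)
  have hxH : x ∈ H := subset_closure (by simp)
  have hgH : g ∈ H := subset_closure (by simp)
  let N := (zpowers x).subgroupOf H
  have : N.Normal := (normal_subgroupOf_iff_le_normalizer (zpowers_le.2 hxH)).2 <|
    (closure_le _).2 <| Set.pair_subset (le_normalizer (mem_zpowers x)) hg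
  have hcyclic : zpowers (QuotientGroup.mk ⟨g, hgH⟩ : H ⧸ N) = ⊤ := by
    refine (eq_top_iff' _).2 fun q => ?_
    obtain ⟨⟨h, hh⟩, rfl⟩ := QuotientGroup.mk_surjective q
    induction hh using closure_induction with
    | mem y hy =>
      obtain rfl | rfl := hy
      · rw [(QuotientGroup.eq_one_iff (⟨y, _⟩ : H)).2 (mem_subgroupOf.2 (mem_zpowers y))]
        exact one_mem _
      · exact mem_zpowers _
    | one => exact one_mem _
    | mul a b _ _ ha hb => exact mul_mem ha hb
    | inv a _ ha => exact inv_mem ha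
  have : IsCyclic (H ⧸ N) := isCyclic_iff_exists_zpowers_eq_top.2 ⟨_, hcyclic⟩
  exact (Group.isSolvable_iff_subgroup_quotient N).2 ⟨inferInstance, inferInstance⟩

theorem isSolvable_closure_pair_of_sq_eq_one {t s : G} (ht : t ^ 2 = 1) (hs : s ^ 2 = 1) :
    Group.IsSolvable (closure {t, s}) := by
  have ht' : t⁻¹ = t := inv_eq_of_mul_eq_one_right (by rw [← pow_two, ht])
  have hs' : s⁻¹ = s := inv_eq_of_mul_eq_one_right (by rw [← pow_two, hs])
  have hinv : t * (t * s) * t⁻¹ = (t * s)⁻¹ := by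
    rw [mul_inv_rev, hs', ht', ← mul_assoc, ← pow_two, ht, one_mul]
  have hle : closure {t, s} ≤ closure {t * s, t} := by
    have hts : t * s ∈ closure ({t * s, t} : Set G) := subset_closure (by simp)
    have htt : t ∈ closure ({t * s, t} : Set G) := subset_closure (by simp)
    refine (closure_le _).2 (Set.pair_subset htt ?_)
    simpa using mul_mem (inv_mem htt) hts
  have := isSolvable_closure_pair_of_mem_normalizer_zpowers
    (mem_normalizer_zpowers_of_mul_mul_inv_eq_inv hinv)
  exact Group.isSolvable_of_isSolvable_injective (inclusion_injective hle)

theorem exists_orderOf_eq_two_mem_normalizer_zpowers [Finite G] {x : G} (hx : x ≠ 1)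
    (hreal : IsConj x x⁻¹) : ∃ t ∈ normalizer (zpowers x : Set G), orderOf t = 2 := by
  by_cases hx2 : x ^ 2 = 1
  · exact ⟨x, le_normalizer (mem_zpowers x), orderOf_eq_prime hx2 hx⟩
  obtain ⟨g, hg⟩ := isConj_iff.1 hreal
  have hg2 : Commute (g ^ 2) x := by
    refine mul_inv_eq_iff_eq_mul.1 ?_
    calc g ^ 2 * x * (g ^ 2)⁻¹ = g * (g * x * g⁻¹) * g⁻¹ := by rw [pow_two]; group
      _ = g * x⁻¹ * g⁻¹ := by rw [hg]
      _ = (g * x * g⁻¹)⁻¹ := by group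
      _ = x := by rw [hg, inv_inv]
  have heven : Even (orderOf g) := by
    by_contra hodd
    obtain ⟨m, hm⟩ := exists_pow_eq_self_of_coprime
      (Nat.coprime_two_left.2 (Nat.not_even_iff_odd.1 hodd))
    have hcomm : Commute g x := hm ▸ hg2.pow_left m
    have hxinv : x = x⁻¹ := hcomm.mul_inv_cancel.symm.trans hg
    exact hx2 (pow_two x ▸ mul_eq_one_iff_eq_inv.2 hxinv)
  exact ⟨g ^ (orderOf g / 2), pow_mem (mem_normalizer_zpowers_of_mul_mul_inv_eq_inv hg) _,
    orderOf_pow_orderOf_div (orderOf_pos g).ne' (even_iff_two_dvd.1 heven)⟩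

theorem solubleGraph_edist_le_one {R : Subgroup G} {a b : {x : G // x ∉ R}}
    (h : Group.IsSolvable (closure {a.1, b.1})) : (solubleGraph G R).edist a b ≤ 1 := by
  rw [SimpleGraph.edist_le_one_iff_adj_or_eq]
  by_cases hab : a = b
  · exact Or.inr hab
  · exact Or.inl (SimpleGraph.fromRel_adj _ _ _ |>.2 ⟨hab, Or.inl h⟩)

end

theorem stmt5_general {G : Type*} [Group G] [Finite G]
    (hreal : ∀ x : G, IsConj x x⁻¹) :
    (solubleGraph G ⊥).ediam ≤ 3 := by
  set Γ := solubleGraph G ⊥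
  have near_involution : ∀ x : {x : G // x ∉ (⊥ : Subgroup G)},
      ∃ t : {x : G // x ∉ (⊥ : Subgroup G)}, t.1 ^ 2 = 1 ∧ Γ.edist x t ≤ 1 := by
    rintro ⟨x, hx⟩
    obtain ⟨t, htx, ht⟩ :=
      exists_orderOf_eq_two_mem_normalizer_zpowers (mem_bot.not.1 hx) (hreal x)
    have ht1 : t ∉ (⊥ : Subgroup G) := mem_bot.not.2 fun h => by simp [h] at ht
    exact ⟨⟨t, ht1⟩, ht ▸ pow_orderOf_eq_one t,
      solubleGraph_edist_le_one (isSolvable_closure_pair_of_mem_normalizer_zpowers htx)⟩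
  refine SimpleGraph.ediam_le_of_edist_le fun x y => ?_
  obtain ⟨t, ht, hxt⟩ := near_involution x
  obtain ⟨s, hs, hys⟩ := near_involution y
  have hts : Γ.edist t s ≤ 1 :=
    solubleGraph_edist_le_one (isSolvable_closure_pair_of_sq_eq_one ht hs)
  calc Γ.edist x y ≤ Γ.edist x s + Γ.edist s y := Γ.edist_triangle
    _ ≤ Γ.edist x t + Γ.edist t s + Γ.edist s y := by gcongr; exact Γ.edist_triangle
    _ ≤ 1 + 1 + 1 := by gcongr; rwa [SimpleGraph.edist_comm]
    _ = 3 := rfl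

theorem stmt5 {G : Type*} [Group G] [Finite G] [Nontrivial G]
    (hR : ∀ N : Subgroup G, N.Normal → IsSolvable N → N = ⊥)
    (hreal : ∀ x : G, IsConj x x⁻¹) :
    (solubleGraph G ⊥).ediam ≤ 3 :=
  stmt5_general hreal
end

section
/- Let G be a nontrivial finite group with R(G) = 1, and suppose a nontrivial element x ∈ G is contained in a unique maximal subgroup H of G. If H is core-free in G and there exists g ∈ G with H ∩ H^g = 1, then the soluble graph of G has diameter at least 3. -/
namespace SimpleGraph

variable {V : Type*} (Γ : SimpleGraph V)

lemma two_lt_edist_of_neighborSet_subset {S T : Set V} (hST : Disjoint S T) {u v : V}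
    (hu : u ∈ S) (hv : v ∈ T) (hS : Γ.neighborSet u ⊆ S) (hT : Γ.neighborSet v ⊆ T) :
    2 < Γ.edist u v := by
  refine Γ.two_lt_edist_iff.mpr ⟨?_, ?_, ?_⟩
  · rintro rfl
    exact hST.notMem_of_mem_left hu hv
  · intro hadj
    exact hST.notMem_of_mem_left (hS hadj) hv
  · refine Set.eq_empty_of_forall_notMem fun w hw => ?_
    rw [mem_commonNeighbors] at hw
    exact hST.notMem_of_mem_left (hS hw.1) (hT hw.2)

end SimpleGraph

namespace Subgroup

variable {G : Type*} [Group G]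

lemma not_isSolvable_of_forall_normal_isSolvable_eq_bot [Nontrivial G]
    (hR : ∀ N : Subgroup G, N.Normal → Group.IsSolvable N → N = ⊥) : ¬ Group.IsSolvable G := by
  intro hG
  exact top_ne_bot (hR ⊤ inferInstance inferInstance)

lemma mem_of_isSolvable_closure_pair [Finite G] (hG : ¬ Group.IsSolvable G) {x z : G}
    {H : Subgroup G} (huniq : ∀ H' : Subgroup G, IsCoatom H' → x ∈ H' → H' = H)
    (hz : Group.IsSolvable (closure ({x, z} : Set G))) : z ∈ H := by
  have hne : closure ({x, z} : Set G) ≠ ⊤ := by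
    rintro htop
    rw [htop] at hz
    exact hG (Group.isSolvable_of_surjective (f := (⊤ : Subgroup G).subtype)
      fun g => ⟨⟨g, mem_top g⟩, rfl⟩)
  obtain ⟨M, hM, hle⟩ := (eq_top_or_exists_le_coatom (closure ({x, z} : Set G))).resolve_left hne
  rw [← huniq M hM (hle (subset_closure (by simp)))]
  exact hle (subset_closure (by simp))

lemma forall_isCoatom_mem_eq_map {x : G} {H : Subgroup G}
    (huniq : ∀ H' : Subgroup G, IsCoatom H' → x ∈ H' → H' = H) (e : G ≃* G) :
    ∀ H' : Subgroup G, IsCoatom H' → e x ∈ H' → H' = H.map e.toMonoidHom := by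
  intro H' hH' hxH'
  have hcomap : H'.comap e.toMonoidHom = H :=
    huniq _ ((isCoatom_comap e).mpr hH') hxH'
  rw [← hcomap, comap_equiv_eq_map_symm', map_map]
  simp

end Subgroup

open Subgroup in
lemma solubleGraph_neighborSet_subset {G : Type*} [Group G] [Finite G]
    (hG : ¬ Group.IsSolvable G) {H : Subgroup G} (u : {x : G // x ∉ (⊥ : Subgroup G)})
    (huniq : ∀ H' : Subgroup G, IsCoatom H' → u.1 ∈ H' → H' = H) :
    (solubleGraph G ⊥).neighborSet u ⊆ {w | w.1 ∈ H} := by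
  intro w hw
  rw [SimpleGraph.mem_neighborSet, solubleGraph, SimpleGraph.fromRel_adj] at hw
  rcases hw.2 with h | h
  · exact mem_of_isSolvable_closure_pair hG huniq h
  · exact mem_of_isSolvable_closure_pair hG huniq (by rwa [Set.pair_comm] at h)

theorem stmt6_general {G : Type*} [Group G] [Finite G] [Nontrivial G]
    (hR : ∀ N : Subgroup G, N.Normal → IsSolvable N → N = ⊥)
    (x : G) (hx : x ≠ 1) (H : Subgroup G) (hxH : x ∈ H)
    (huniq : ∀ H' : Subgroup G, IsCoatom H' → x ∈ H' → H' = H)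
    (hbase : ∃ g : G, H ⊓ H.map (MulAut.conj g).toMonoidHom = ⊥) :
    3 ≤ (solubleGraph G ⊥).ediam := by
  obtain ⟨g, hg⟩ := hbase
  have hG := Subgroup.not_isSolvable_of_forall_normal_isSolvable_eq_bot hR
  let u : {x : G // x ∉ (⊥ : Subgroup G)} := ⟨x, by simpa using hx⟩
  let v : {x : G // x ∉ (⊥ : Subgroup G)} := ⟨MulAut.conj g x, by simpa using hx⟩
  have hdisj : Disjoint {w : {x : G // x ∉ (⊥ : Subgroup G)} | w.1 ∈ H}
      {w | w.1 ∈ H.map (MulAut.conj g).toMonoidHom} :=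
    Set.disjoint_left.mpr fun w hwH hwHg => w.2 (hg.le ⟨hwH, hwHg⟩)
  have h2 := (solubleGraph G ⊥).two_lt_edist_of_neighborSet_subset hdisj (u := u) (v := v) hxH
    ⟨x, hxH, rfl⟩ (solubleGraph_neighborSet_subset hG u huniq)
    (solubleGraph_neighborSet_subset hG v (Subgroup.forall_isCoatom_mem_eq_map huniq _))
  exact (Order.add_one_le_of_lt h2).trans SimpleGraph.edist_le_ediam

theorem stmt6 {G : Type*} [Group G] [Finite G] [Nontrivial G]
    (hR : ∀ N : Subgroup G, N.Normal → IsSolvable N → N = ⊥)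
    (x : G) (hx : x ≠ 1) (H : Subgroup G) (hmax : IsCoatom H) (hxH : x ∈ H)
    (huniq : ∀ H' : Subgroup G, IsCoatom H' → x ∈ H' → H' = H)
    (hcore : H.normalCore = ⊥)
    (hbase : ∃ g : G, H ⊓ H.map (MulAut.conj g).toMonoidHom = ⊥) :
    3 ≤ (solubleGraph G ⊥).ediam :=
  stmt6_general hR x hx H hxH huniq hbase
end

section
/- Let p ≥ 5 be a prime and G = A_p the alternating group. Then the non-generating graph of G has diameter at most 3, where the non-generating graph has as vertices the nontrivial elements of G, with x adjacent to y if and only if ⟨x, y⟩ ≠ G. -/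
/-- The non-generating graph of a group `G`: vertices are the nontrivial elements of `G`,
with two distinct vertices adjacent iff they do not generate `G`. -/
def nonGenGraph (G : Type*) [Group G] : SimpleGraph {x : G // x ≠ 1} :=
  SimpleGraph.fromRel (fun x y => Subgroup.closure ({x.1, y.1} : Set G) ≠ ⊤)

/-!
Fix a point `a`. It suffices that every nontrivial `x ∈ Aₙ` lies in a proper subgroup together
with a nontrivial `z_x` fixing `a`: the point stabilizer of `a` is proper, so
`x - z_x - z_y - y` is a path. If `x` fixes `a`, take `z_x = x`. If `x` is intransitive, it
preserves an orbit `S ∌ a`, and the stabilizer of `S` contains a 3-cycle or a double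
transposition fixing `a`. Otherwise `x` is an `n`-cycle with `n` odd (as `x` is even), so `x` is
conjugate to `x²` by some `w` fixing `a`; then `z_x = w²` is even, nontrivial as `x⁴ ≠ x`, and
normalizes `⟨x⟩`, whose normalizer is proper because `Aₙ` is simple and nonabelian.
-/

open Equiv Equiv.Perm Subgroup MulAction Set
open scoped Pointwise

section NonGenGraph

variable {G : Type*} [Group G]

theorem closure_pair_ne_top_of_mem {H : Subgroup G} (hH : H ≠ ⊤) {x y : G} (hx : x ∈ H)
    (hy : y ∈ H) : closure {x, y} ≠ ⊤ :=
  ne_top_of_le_ne_top hH <| (closure_le H).mpr <| insert_subset hx (singleton_subset_iff.mpr hy)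

theorem nonGenGraph_edist_le_one {x y : {x : G // x ≠ 1}} (h : closure {x.1, y.1} ≠ ⊤) :
    (nonGenGraph G).edist x y ≤ 1 := by
  rcases eq_or_ne x y with rfl | hne
  · simp
  · exact (SimpleGraph.edist_eq_one_iff_adj.mpr (by simp [nonGenGraph, hne, h])).le

theorem nonGenGraph_ediam_le_three {K : Subgroup G} (hK : K ≠ ⊤)
    (h : ∀ x : G, x ≠ 1 → ∃ z ∈ K, z ≠ 1 ∧ closure {x, z} ≠ ⊤) :
    (nonGenGraph G).ediam ≤ 3 := by
  refine SimpleGraph.ediam_le_iff.mpr fun x y ↦ ?_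
  obtain ⟨zx, hzxK, hzx, hxzx⟩ := h x.1 x.2
  obtain ⟨zy, hzyK, hzy, hyzy⟩ := h y.1 y.2
  let x' : {x : G // x ≠ 1} := ⟨zx, hzx⟩
  let y' : {x : G // x ≠ 1} := ⟨zy, hzy⟩
  calc (nonGenGraph G).edist x y
      ≤ (nonGenGraph G).edist x x' +
          ((nonGenGraph G).edist x' y' + (nonGenGraph G).edist y' y) :=
        SimpleGraph.edist_triangle.trans (add_le_add_right SimpleGraph.edist_triangle _)
    _ ≤ 1 + (1 + 1) := by
        gcongr
        · exact nonGenGraph_edist_le_one hxzx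
        · exact nonGenGraph_edist_le_one (closure_pair_ne_top_of_mem hK hzxK hzyK)
        · exact nonGenGraph_edist_le_one (by rwa [Set.pair_comm])
    _ = 3 := by norm_num

end NonGenGraph

theorem normalizer_zpowers_ne_top {G : Type*} [Group G] [IsSimpleGroup G]
    (hG : commutator G ≠ ⊥) {x : G} (hx : x ≠ 1) : normalizer (zpowers x : Set G) ≠ ⊤ := by
  intro h
  rcases (normalizer_eq_top_iff.mp h).eq_bot_or_eq_top with hbot | htop
  · exact hx (by simpa [hbot] using mem_zpowers x)
  · refine hG ?_
    rw [commutator_def, ← htop, commutator_eq_bot_iff_le_centralizer]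
    exact le_centralizer _

section Alternating

variable {α : Type*} [Fintype α] [DecidableEq α]

theorem Equiv.Perm.IsCycle.odd_card_support {x : Perm α} (hx : x.IsCycle)
    (hxA : x ∈ alternatingGroup α) : Odd x.support.card := by
  rw [mem_alternatingGroup, hx.sign, neg_eq_iff_eq_neg] at hxA
  exact (neg_one_pow_eq_neg_one_iff_odd (by decide)).mp hxA

theorem Equiv.Perm.IsCycle.exists_apply_eq_self_conj_eq_sq {x : Perm α} (hx : x.IsCycle)
    (hodd : Odd x.support.card) {a : α} (ha : x a ≠ a) :
    ∃ w : Perm α, w a = a ∧ w * x * w⁻¹ = x ^ 2 := by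
  have hcop : Nat.Coprime 2 (orderOf x) := by rwa [hx.orderOf, Nat.coprime_two_left]
  have hsupp : (x ^ 2).support = x.support := support_pow_coprime hcop
  obtain ⟨w, hw⟩ := _root_.isConj_iff.mp (hx.isConj (hx.pow_iff.mpr hcop) (by rw [hsupp]))
  have hwa : x (w a) ≠ w a := by
    rw [← mem_support, ← hsupp, mem_support, ← hw]
    simpa using ha
  obtain ⟨i, hi⟩ := hx.sameCycle hwa ha
  refine ⟨x ^ i * w, hi, ?_⟩
  calc x ^ i * w * x * (x ^ i * w)⁻¹ = x ^ i * (w * x * w⁻¹) * (x ^ i)⁻¹ := by group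
    _ = x ^ 2 := by rw [hw]; group

theorem exists_mem_stabilizer_ne_one_mem_stabilizer_set_of_swaps {S : Set α} {a u v u' v' : α}
    (huv : u ≠ v) (hu'v' : u' ≠ v') (hu : u ≠ u' ∧ u ≠ v')
    (ha : a ≠ u ∧ a ≠ v ∧ a ≠ u' ∧ a ≠ v') (hS : u ∈ S ↔ v ∈ S) (hS' : u' ∈ S ↔ v' ∈ S) :
    ∃ z ∈ stabilizer (alternatingGroup α) a, z ≠ 1 ∧ z ∈ stabilizer (alternatingGroup α) S := by
  refine ⟨⟨swap u v * swap u' v', by simp [huv, hu'v']⟩, ?_, fun h ↦ huv.symm ?_, ?_⟩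
  · rw [mem_stabilizer_iff, Subgroup.mk_smul, Perm.smul_def, Perm.mul_apply,
      swap_apply_of_ne_of_ne ha.2.2.1 ha.2.2.2, swap_apply_of_ne_of_ne ha.1 ha.2.1]
  · simpa [swap_apply_of_ne_of_ne hu.1 hu.2] using congr(($h : Perm α) u)
  · exact mul_mem (swap_mem_stabilizer.mpr hS) (swap_mem_stabilizer.mpr hS')

theorem exists_mem_stabilizer_ne_one_mem_stabilizer_set (hα : 5 ≤ Nat.card α) {S : Set α}
    {a : α} (ha : a ∉ S) :
    ∃ z ∈ stabilizer (alternatingGroup α) a, z ≠ 1 ∧ z ∈ stabilizer (alternatingGroup α) S := by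
  have hcard : S.ncard + (Sᶜ \ {a}).ncard + 1 = Nat.card α := by
    rw [add_assoc, ncard_sdiff_singleton_add_one (mem_compl ha), ncard_add_ncard_compl]
  by_cases hS : 2 < S.ncard
  · obtain ⟨u, v, w, hu, hv, hw, huv, huw, hvw⟩ := (two_lt_ncard_iff).mp hS
    exact exists_mem_stabilizer_ne_one_mem_stabilizer_set_of_swaps huv hvw ⟨huv, huw⟩
      (by grind) (iff_of_true hu hv) (iff_of_true hv hw)
  by_cases hT : 2 < (Sᶜ \ {a}).ncard
  · obtain ⟨u, v, w, hu, hv, hw, huv, huw, hvw⟩ := (two_lt_ncard_iff).mp hT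
    exact exists_mem_stabilizer_ne_one_mem_stabilizer_set_of_swaps huv hvw ⟨huv, huw⟩
      (by grind) (iff_of_false hu.1 hv.1) (iff_of_false hv.1 hw.1)
  obtain ⟨u, v, hu, hv, huv⟩ := (one_lt_ncard_iff).mp (by omega : 1 < S.ncard)
  obtain ⟨u', v', hu', hv', hu'v'⟩ := (one_lt_ncard_iff).mp (by omega : 1 < (Sᶜ \ {a}).ncard)
  exact exists_mem_stabilizer_ne_one_mem_stabilizer_set_of_swaps huv hu'v'
    (by grind) (by grind) (iff_of_true hu hv) (iff_of_false hu'.1 hv'.1)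

theorem alternatingGroup.stabilizer_ne_top_of_three_le_card (h3 : 3 ≤ Nat.card α) (a : α) :
    stabilizer (alternatingGroup α) a ≠ ⊤ := by
  rw [← stabilizer_singleton]
  exact (alternatingGroup.isCoatom_stabilizer_singleton h3 (singleton_nonempty a)
    subsingleton_singleton).1

theorem exists_mem_stabilizer_closure_ne_top_of_not_sameCycle (hα : 5 ≤ Nat.card α)
    {x : alternatingGroup α} {a b : α} (ha : (x : Perm α) a ≠ a)
    (hab : ¬ (x : Perm α).SameCycle a b) :
    ∃ z ∈ stabilizer (alternatingGroup α) a, z ≠ 1 ∧ closure {x, z} ≠ ⊤ := by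
  set S := {c | (x : Perm α).SameCycle b c}
  have haS : a ∉ S := fun h ↦ hab h.symm
  have hxaS : (x : Perm α) a ∉ S := fun h ↦ haS (sameCycle_apply_right.mp h)
  have hxS : x ∈ stabilizer (alternatingGroup α) S :=
    (mem_stabilizer_set' S.toFinite).mpr fun _ hc ↦ sameCycle_apply_right.mpr hc
  obtain ⟨z, hza, hz1, hzS⟩ := exists_mem_stabilizer_ne_one_mem_stabilizer_set hα haS
  exact ⟨z, hza, hz1, closure_pair_ne_top_of_mem (alternatingGroup.stabilizer_ne_top
    ⟨b, SameCycle.refl _ _⟩ ⟨a, haS, _, hxaS, ha.symm⟩) hxS hzS⟩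

theorem exists_mem_stabilizer_closure_ne_top_of_isCycle (hα : 5 ≤ Nat.card α)
    {x : alternatingGroup α} (hx : (x : Perm α).IsCycle) (hx3 : 3 < (x : Perm α).support.card)
    {a : α} (ha : (x : Perm α) a ≠ a) :
    ∃ z ∈ stabilizer (alternatingGroup α) a, z ≠ 1 ∧ closure {x, z} ≠ ⊤ := by
  obtain ⟨w, hwa, hw⟩ := hx.exists_apply_eq_self_conj_eq_sq (hx.odd_card_support x.2) ha
  let z : alternatingGroup α := ⟨w ^ 2, by simp [mem_alternatingGroup, Int.units_sq]⟩
  have hz : z * x * z⁻¹ = x ^ 4 := Subtype.ext <| by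
    calc w ^ 2 * x * (w ^ 2)⁻¹ = w * (w * x * w⁻¹) * w⁻¹ := by
          simp only [sq, mul_inv_rev, mul_assoc]
      _ = (w * x * w⁻¹) ^ 2 := by rw [conj_pow, hw]
      _ = (x : Perm α) ^ 4 := by rw [hw, ← pow_mul]
  have : IsSimpleGroup (alternatingGroup α) := alternatingGroup.isSimpleGroup hα
  refine ⟨z, by simp [mem_stabilizer_iff, z, hwa, sq], fun h1 ↦ ?_, closure_pair_ne_top_of_mem
    (normalizer_zpowers_ne_top ?_ ?_) (le_normalizer (mem_zpowers x)) ?_⟩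
  · rw [h1, one_mul, inv_one, mul_one] at hz
    refine pow_ne_one_of_lt_orderOf (x := x) (n := 3) (by norm_num) ?_
      (mul_eq_left.mp (by rw [← pow_succ', ← hz]))
    rwa [← Subgroup.orderOf_coe, hx.orderOf]
  · rw [commutator_alternatingGroup_eq_top hα]
    exact top_ne_bot
  · rintro rfl
    exact ha rfl
  · refine mem_normalizer_fintype fun n hn ↦ ?_
    obtain ⟨k, rfl⟩ := mem_zpowers_iff.mp hn
    rw [← conj_zpow, hz]
    exact zpow_mem (pow_mem (mem_zpowers x) 4) k

theorem exists_mem_stabilizer_closure_ne_top (hα : 5 ≤ Nat.card α) (a : α)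
    {x : alternatingGroup α} (hx : x ≠ 1) :
    ∃ z ∈ stabilizer (alternatingGroup α) a, z ≠ 1 ∧ closure {x, z} ≠ ⊤ := by
  by_cases hxa : (x : Perm α) a = a
  · exact ⟨x, hxa, hx, closure_pair_ne_top_of_mem
      (alternatingGroup.stabilizer_ne_top_of_three_le_card (by omega) a) hxa hxa⟩
  by_cases htrans : ∀ b, (x : Perm α).SameCycle a b
  · have hsupp : (x : Perm α).support = Finset.univ := Finset.eq_univ_of_forall fun b ↦
      mem_support.mpr ((htrans b).apply_eq_self_iff.not.mp hxa)
    refine exists_mem_stabilizer_closure_ne_top_of_isCycle hα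
      ⟨a, hxa, fun b _ ↦ htrans b⟩ ?_ hxa
    rw [hsupp, Finset.card_univ, ← Nat.card_eq_fintype_card]
    omega
  obtain ⟨b, hab⟩ := not_forall.mp htrans
  exact exists_mem_stabilizer_closure_ne_top_of_not_sameCycle hα hxa hab

theorem nonGenGraph_alternatingGroup_ediam_le_three (hα : 5 ≤ Nat.card α) :
    (nonGenGraph (alternatingGroup α)).ediam ≤ 3 := by
  obtain ⟨a⟩ : Nonempty α := (Nat.card_pos_iff.mp (by omega)).1
  exact nonGenGraph_ediam_le_three
    (alternatingGroup.stabilizer_ne_top_of_three_le_card (by omega) a)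
    fun _ hx ↦ exists_mem_stabilizer_closure_ne_top hα a hx

end Alternating

theorem stmt12_general (p : ℕ) (hp5 : 5 ≤ p) :
    (nonGenGraph (alternatingGroup (Fin p))).ediam ≤ 3 :=
  nonGenGraph_alternatingGroup_ediam_le_three (by simpa using hp5)

theorem stmt12 (p : ℕ) (hp : p.Prime) (hp5 : 5 ≤ p) :
    (nonGenGraph (alternatingGroup (Fin p))).ediam ≤ 3 :=
  stmt12_general p hp5
end

section
/- Let G be a finite group with R(G) = 1 and let x, y be adjacent vertices in the soluble graph of G. Then x and y have distance at most 2 in the metabelian graph of G, i.e., there exists a nontrivial z ∈ G such that ⟨x, z⟩ and ⟨y, z⟩ are both metabelian. -/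
/-- A group is metabelian if its derived subgroup is abelian, i.e. the second term of the
derived series is trivial. -/
def IsMetabelian (K : Type*) [Group K] : Prop :=
  derivedSeries K 2 = ⊥

/-! The soluble group `H = ⟨x, y⟩` is nontrivial, so the last nontrivial term `A` of its
derived series is abelian and normalized by `x` and `y`. For `1 ≠ n ∈ A` the subgroups `⟨x, n⟩`
and `⟨y, n⟩` become cyclic modulo `A`, so their derived subgroups lie in the abelian group `A`. -/

open Subgroup

theorem Group.IsSolvable.exists_derivedSeries_ne_bot_succ_eq_bot (G : Type*) [Group G]
    [Group.IsSolvable G] [Nontrivial G] :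
    ∃ k, derivedSeries G k ≠ ⊥ ∧ derivedSeries G (k + 1) = ⊥ := by
  classical
  have hex : ∃ n, derivedSeries G n = ⊥ := Group.IsSolvable.solvable
  have hpos : Nat.find hex ≠ 0 := fun h ↦ top_ne_bot (h ▸ Nat.find_spec hex)
  refine ⟨Nat.find hex - 1, Nat.find_min hex (by omega), ?_⟩
  rw [Nat.sub_add_cancel (Nat.pos_of_ne_zero hpos)]
  exact Nat.find_spec hex

section

variable {G : Type*} [Group G]

theorem isMetabelian_of_commutator_le {K A : Subgroup G}
    (hKA : ⁅K, K⁆ ≤ A) (hA : ⁅A, A⁆ = ⊥) : IsMetabelian K := by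
  have hK : (derivedSeries K 1).map K.subtype = ⁅K, K⁆ := by
    rw [derivedSeries_one, commutator_def, map_commutator, ← MonoidHom.range_eq_map,
      range_subtype]
  rw [IsMetabelian, ← map_eq_bot_iff_of_injective _ K.subtype_injective, derivedSeries_succ,
    map_commutator, hK, ← le_bot_iff, ← hA]
  exact commutator_mono hKA hKA

theorem commutator_closure_pair_le_of_normal {A : Subgroup G} [A.Normal]
    (x : G) {n : G} (hn : n ∈ A) : ⁅closure {x, n}, closure {x, n}⁆ ≤ A := by
  have hmap : (closure {x, n}).map (QuotientGroup.mk' A) = zpowers (x : G ⧸ A) := by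
    rw [MonoidHom.map_closure, Set.image_pair, QuotientGroup.mk'_apply, QuotientGroup.mk'_apply,
      (QuotientGroup.eq_one_iff n).mpr hn, Set.pair_comm, closure_insert_one, zpowers_eq_closure]
  rw [← QuotientGroup.ker_mk' A, ← Subgroup.map_eq_bot_iff, map_commutator, hmap,
    commutator_self_eq_bot_iff]
  infer_instance

theorem commutator_closure_pair_le {A : Subgroup G} {x n : G}
    (hx : x ∈ normalizer (A : Set G)) (hn : n ∈ A) : ⁅closure {x, n}, closure {x, n}⁆ ≤ A := by
  set L := normalizer (A : Set G)
  have hnL : n ∈ L := A.le_normalizer hn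
  set K := closure {(⟨x, hx⟩ : L), ⟨n, hnL⟩}
  have hclosure : K.map L.subtype = closure {x, n} := by
    rw [MonoidHom.map_closure, Set.image_pair]; rfl
  have hle : ⁅K, K⁆ ≤ A.subgroupOf L :=
    commutator_closure_pair_le_of_normal _ (mem_subgroupOf.mpr hn)
  calc ⁅closure {x, n}, closure {x, n}⁆
      = ⁅K, K⁆.map L.subtype := by rw [map_commutator, hclosure]
    _ ≤ (A.subgroupOf L).map L.subtype := map_mono hle
    _ ≤ A := by rw [subgroupOf_map_subtype]; exact inf_le_left

theorem isMetabelian_closure_pair_of_mem_normalizer {A : Subgroup G} (hA : ⁅A, A⁆ = ⊥)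
    {x n : G} (hx : x ∈ normalizer (A : Set G)) (hn : n ∈ A) : IsMetabelian (closure {x, n}) :=
  isMetabelian_of_commutator_le (commutator_closure_pair_le hx hn) hA

theorem le_normalizer_map_subtype (H : Subgroup G) (P : Subgroup H)
    [P.Normal] : H ≤ normalizer ((P.map H.subtype : Subgroup G) : Set G) := by
  have := le_normalizer_map (H := P) H.subtype
  rwa [normalizer_eq_top, ← MonoidHom.range_eq_map, range_subtype] at this

theorem Subgroup.exists_abelian_ne_bot_le_normalizer (H : Subgroup G)
    [Group.IsSolvable H] [Nontrivial H] :
    ∃ A : Subgroup G, A ≠ ⊥ ∧ ⁅A, A⁆ = ⊥ ∧ H ≤ normalizer (A : Set G) := by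
  obtain ⟨k, hk, hk1⟩ := Group.IsSolvable.exists_derivedSeries_ne_bot_succ_eq_bot H
  refine ⟨(derivedSeries H k).map H.subtype, ?_, ?_, le_normalizer_map_subtype H _⟩
  · exact fun h ↦ hk ((map_eq_bot_iff_of_injective _ H.subtype_injective).mp h)
  · rw [← map_commutator, ← derivedSeries_succ, hk1, Subgroup.map_bot]

end

theorem stmt13_general {G : Type*} [Group G]
    (x y : {a : G // a ∉ (⊥ : Subgroup G)}) (hadj : (solubleGraph G ⊥).Adj x y) :
    ∃ z : G, z ≠ 1 ∧ IsMetabelian (Subgroup.closure ({x.1, z} : Set G)) ∧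
      IsMetabelian (Subgroup.closure ({y.1, z} : Set G)) := by
  set H := closure ({x.1, y.1} : Set G)
  have : Group.IsSolvable H := by
    rcases hadj.2 with h | h
    · exact h
    · rwa [Set.pair_comm] at h
  have hxH : x.1 ∈ H := subset_closure (Set.mem_insert _ _)
  have hyH : y.1 ∈ H := subset_closure (Set.mem_insert_of_mem _ rfl)
  have : Nontrivial H :=
    ⟨⟨x.1, hxH⟩, 1, fun h ↦ x.2 (by simpa using congrArg Subtype.val h)⟩
  obtain ⟨A, hA, hAA, hHA⟩ := H.exists_abelian_ne_bot_le_normalizer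
  obtain ⟨⟨n, hnA⟩, hn1⟩ := A.ne_bot_iff_exists_ne_one.mp hA
  exact ⟨n, fun h ↦ hn1 (Subtype.ext h),
    isMetabelian_closure_pair_of_mem_normalizer hAA (hHA hxH) hnA,
    isMetabelian_closure_pair_of_mem_normalizer hAA (hHA hyH) hnA⟩

theorem stmt13 {G : Type*} [Group G] [Finite G]
    (hR : ∀ N : Subgroup G, N.Normal → IsSolvable N → N = ⊥)
    (x y : {a : G // a ∉ (⊥ : Subgroup G)}) (hadj : (solubleGraph G ⊥).Adj x y) :
    ∃ z : G, z ≠ 1 ∧ IsMetabelian (Subgroup.closure ({x.1, z} : Set G)) ∧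
      IsMetabelian (Subgroup.closure ({y.1, z} : Set G)) :=
  stmt13_general x y hadj
end
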